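/- arXiv:2302.02870 — 2 statements merged into one kernel-verified Lean document; each statement's English description precedes it below -/
import Mathlib

section
/- The analytic rank of polynomial maps satisfies a restriction Lipschitz property: for any polynomial map φ: F_p^n → F_p^k of degree at most d and any sets I, J ⊆ [n], arank_d(φ_{|I ∪ J}) ≤ arank_d(φ_{|I}) + |J|. -/
open Finset
open scoped Classical

noncomputable section

/-- A map is (representable as) a polynomial map of degree at most `d`. -/
def IsPolyDegLe (p : ℕ) {ι : Type} [Fintype ι] [DecidableEq ι] [NeZero p] (k d : ℕ)
    (φ : (ι → ZMod p) → (Fin k → ZMod p)) : Prop :=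
  ∃ f : Fin k → MvPolynomial ι (ZMod p),
    (∀ j, (f j).totalDegree ≤ d) ∧ ∀ x j, MvPolynomial.eval x (f j) = φ x j

/-- Probability of agreement of two maps under a uniformly random input. -/
def prAgree (p : ℕ) {ι : Type} [Fintype ι] [DecidableEq ι] [NeZero p] (k : ℕ)
    (φ ψ : (ι → ZMod p) → (Fin k → ZMod p)) : ℝ :=
  ((Finset.univ.filter (fun x => φ x = ψ x)).card : ℝ) / (Fintype.card (ι → ZMod p))

/-- The analytic rank of a polynomial map of degree at most `d`:
`-log_p` of the maximal agreement probability with a map of degree at most `d-1`. -/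
def arank (p : ℕ) {ι : Type} [Fintype ι] [DecidableEq ι] [NeZero p] (k d : ℕ)
    (φ : (ι → ZMod p) → (Fin k → ZMod p)) : ℝ :=
  - Real.logb p (sSup {r : ℝ | ∃ ψ, IsPolyDegLe p k (d - 1) ψ ∧ r = prAgree p k φ ψ})

/-- Extend a vector indexed by `I` to all of `Fin n` by zero. -/
def extendZero (p n : ℕ) (I : Finset (Fin n)) (y : ↥I → ZMod p) : Fin n → ZMod p :=
  fun i => if h : i ∈ I then y ⟨i, h⟩ else 0

section Aux

variable (p : ℕ) [Fact p.Prime] {ι : Type} [Fintype ι] [DecidableEq ι] (k d : ℕ)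

lemma prAgree_nonneg (φ ψ : (ι → ZMod p) → (Fin k → ZMod p)) :
    0 ≤ prAgree p k φ ψ := by
  unfold prAgree; positivity

lemma prAgree_le_one (φ ψ : (ι → ZMod p) → (Fin k → ZMod p)) :
    prAgree p k φ ψ ≤ 1 := by
  unfold prAgree
  rw [div_le_one (by exact_mod_cast Fintype.card_pos)]
  exact_mod_cast Finset.card_le_card (Finset.filter_subset _ _)

lemma arankSet_bddAbove (φ : (ι → ZMod p) → (Fin k → ZMod p)) :
    BddAbove {r : ℝ | ∃ ψ, IsPolyDegLe p k (d - 1) ψ ∧ r = prAgree p k φ ψ} := by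
  refine ⟨1, fun r hr => ?_⟩
  obtain ⟨ψ, _, rfl⟩ := hr
  exact prAgree_le_one p k φ ψ

lemma const_isPolyDegLe (c : Fin k → ZMod p) :
    IsPolyDegLe p k (d - 1) (fun _ : ι → ZMod p => c) := by
  refine ⟨fun j => MvPolynomial.C (c j), fun j => ?_, fun x j => ?_⟩
  · simp [MvPolynomial.totalDegree_C]
  · simp

lemma arankSet_nonempty (φ : (ι → ZMod p) → (Fin k → ZMod p)) :
    Set.Nonempty {r : ℝ | ∃ ψ, IsPolyDegLe p k (d - 1) ψ ∧ r = prAgree p k φ ψ} :=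
  ⟨_, fun _ => φ 0, const_isPolyDegLe p k d (φ 0), rfl⟩

lemma sSup_arankSet_pos (φ : (ι → ZMod p) → (Fin k → ZMod p)) :
    0 < sSup {r : ℝ | ∃ ψ, IsPolyDegLe p k (d - 1) ψ ∧ r = prAgree p k φ ψ} := by
  have hmem : prAgree p k φ (fun _ => φ 0) ∈
      {r : ℝ | ∃ ψ, IsPolyDegLe p k (d - 1) ψ ∧ r = prAgree p k φ ψ} :=
    ⟨fun _ => φ 0, const_isPolyDegLe p k d (φ 0), rfl⟩
  have hpos : 0 < prAgree p k φ (fun _ => φ 0) := by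
    unfold prAgree
    apply div_pos
    · have : (0 : ι → ZMod p) ∈ Finset.univ.filter
          (fun x => φ x = (fun _ : ι → ZMod p => φ 0) x) := by simp
      exact_mod_cast Finset.card_pos.mpr ⟨_, this⟩
    · exact_mod_cast Fintype.card_pos
  exact lt_of_lt_of_le hpos (le_csSup (arankSet_bddAbove p k d φ) hmem)

end Aux

theorem stmt_7 (p : ℕ) [Fact p.Prime] (n k d : ℕ)
    (φ : (Fin n → ZMod p) → (Fin k → ZMod p))
    (hφ : IsPolyDegLe p k d φ) (I J : Finset (Fin n)) :
    arank p k d (fun y : ↥(I ∪ J) → ZMod p => φ (extendZero p n (I ∪ J) y)) ≤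
      arank p k d (fun y : ↥I → ZMod p => φ (extendZero p n I y)) + (J.card : ℝ) := by
  have hp1 : (1 : ℝ) < p := by exact_mod_cast (Fact.out : p.Prime).one_lt
  have hp0 : (0 : ℝ) < p := by linarith
  set φI := fun y : ↥I → ZMod p => φ (extendZero p n I y) with hφI
  set φIJ := fun y : ↥(I ∪ J) → ZMod p => φ (extendZero p n (I ∪ J) y) with hφIJ
  set SI := sSup {r : ℝ | ∃ ψ, IsPolyDegLe p k (d - 1) ψ ∧ r = prAgree p k φI ψ} with hSI
  set SIJ := sSup {r : ℝ | ∃ ψ, IsPolyDegLe p k (d - 1) ψ ∧ r = prAgree p k φIJ ψ} with hSIJ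
  have hSIpos : 0 < SI := sSup_arankSet_pos p k d φI
  have hSIJpos : 0 < SIJ := sSup_arankSet_pos p k d φIJ
  -- Key inequality: SI ≤ p^|J| * SIJ
  have key : SI ≤ (p : ℝ) ^ J.card * SIJ := by
    apply csSup_le (arankSet_nonempty p k d φI)
    rintro r ⟨ψ, ⟨f, hdeg, heval⟩, rfl⟩
    -- embedding of I into I ∪ J
    set e : ↥I → ↥(I ∪ J) := fun i => ⟨i, Finset.mem_union_left J i.2⟩ with he
    set ψ' : (↥(I ∪ J) → ZMod p) → (Fin k → ZMod p) :=
      fun y => ψ (fun i => y (e i)) with hψ'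
    have hψ'poly : IsPolyDegLe p k (d - 1) ψ' := by
      refine ⟨fun j => MvPolynomial.rename e (f j), fun j => ?_, fun y j => ?_⟩
      · exact le_trans (MvPolynomial.totalDegree_rename_le e (f j)) (hdeg j)
      · rw [MvPolynomial.eval_rename]
        exact heval (fun i => y (e i)) j
    -- lift of a vector on I to a vector on I ∪ J (zero on J \ I)
    set lift : (↥I → ZMod p) → (↥(I ∪ J) → ZMod p) :=
      fun x j => extendZero p n I x (j : Fin n) with hlift
    have hlift_ext : ∀ x, extendZero p n (I ∪ J) (lift x) = extendZero p n I x := by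
      intro x
      funext i
      by_cases hIJ : i ∈ I ∪ J
      · show (if h : i ∈ I ∪ J then lift x ⟨i, h⟩ else 0) = _
        rw [dif_pos hIJ]
      · have hI : i ∉ I := fun h => hIJ (Finset.mem_union_left J h)
        show (if h : i ∈ I ∪ J then lift x ⟨i, h⟩ else 0) =
          (if h : i ∈ I then x ⟨i, h⟩ else 0)
        rw [dif_neg hIJ, dif_neg hI]
    have hlift_e : ∀ x (i : ↥I), lift x (e i) = x i := by
      intro x i
      show (if h : (i : Fin n) ∈ I then x ⟨i, h⟩ else 0) = x i
      rw [dif_pos i.2]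
    have hlift_inj : Function.Injective lift := by
      intro x x' h
      funext i
      have := congrFun h (e i)
      rwa [hlift_e, hlift_e] at this
    -- counting
    set cI := (Finset.univ.filter (fun x => φI x = ψ x)).card with hcI
    set cIJ := (Finset.univ.filter (fun y => φIJ y = ψ' y)).card with hcIJ
    have hcard : cI ≤ cIJ := by
      apply Finset.card_le_card_of_injOn lift
      · intro x hx
        rw [Finset.mem_coe, Finset.mem_filter] at hx ⊢
        refine ⟨Finset.mem_univ _, ?_⟩
        have h1 : φIJ (lift x) = φI x := by
          simp only [hφIJ, hφI, hlift_ext]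
        have h2 : ψ' (lift x) = ψ x := by
          show ψ (fun i => lift x (e i)) = ψ x
          rw [show (fun i => lift x (e i)) = x from funext (hlift_e x)]
        rw [h1, h2, hx.2]
      · exact fun x _ x' _ h => hlift_inj h
    have hψ'le : prAgree p k φIJ ψ' ≤ SIJ :=
      le_csSup (arankSet_bddAbove p k d φIJ) ⟨ψ', hψ'poly, rfl⟩
    -- arithmetic: prAgree φI ψ ≤ p^|J| * prAgree φIJ ψ'
    have e1 : prAgree p k φI ψ = (cI : ℝ) / (p : ℝ) ^ I.card := by
      unfold prAgree
      rw [Fintype.card_fun, ZMod.card, Fintype.card_coe, Nat.cast_pow]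
    have e2 : prAgree p k φIJ ψ' = (cIJ : ℝ) / (p : ℝ) ^ (I ∪ J).card := by
      unfold prAgree
      rw [Fintype.card_fun, ZMod.card, Fintype.card_coe, Nat.cast_pow]
    have harith : prAgree p k φI ψ ≤ (p : ℝ) ^ J.card * prAgree p k φIJ ψ' := by
      rw [e1, e2]
      have hpI : (0:ℝ) < (p : ℝ) ^ I.card := pow_pos hp0 _
      have hpJ : (0:ℝ) < (p : ℝ) ^ J.card := pow_pos hp0 _
      have hpIJ : (0:ℝ) < (p : ℝ) ^ (I ∪ J).card := pow_pos hp0 _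
      have hden : ((p : ℝ) ^ (I ∪ J).card) ≤ (p : ℝ) ^ I.card * (p : ℝ) ^ J.card := by
        rw [← pow_add]
        exact pow_le_pow_right₀ (le_of_lt hp1) (Finset.card_union_le I J)
      have hnum : (p : ℝ) ^ J.card * (cI : ℝ) ≤ (p : ℝ) ^ J.card * (cIJ : ℝ) :=
        mul_le_mul_of_nonneg_left (Nat.cast_le.mpr hcard) (le_of_lt hpJ)
      have hnum0 : (0:ℝ) ≤ (p : ℝ) ^ J.card * (cIJ : ℝ) :=
        mul_nonneg (le_of_lt hpJ) (Nat.cast_nonneg _)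
      calc (cI : ℝ) / (p : ℝ) ^ I.card
          = ((p : ℝ) ^ J.card * cI) / ((p : ℝ) ^ I.card * (p : ℝ) ^ J.card) := by
            rw [mul_comm ((p:ℝ) ^ I.card),
              mul_div_mul_left _ _ (ne_of_gt hpJ)]
        _ ≤ ((p : ℝ) ^ J.card * cIJ) / ((p : ℝ) ^ (I ∪ J).card) :=
            div_le_div₀ hnum0 hnum hpIJ hden
        _ = (p : ℝ) ^ J.card * ((cIJ : ℝ) / (p : ℝ) ^ (I ∪ J).card) := mul_div_assoc _ _ _
    calc prAgree p k φI ψ ≤ (p : ℝ) ^ J.card * prAgree p k φIJ ψ' := harith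
      _ ≤ (p : ℝ) ^ J.card * SIJ := by
          exact mul_le_mul_of_nonneg_left hψ'le (by positivity)
  -- conclude via logarithms
  show -Real.logb p SIJ ≤ -Real.logb p SI + (J.card : ℝ)
  have hlog : Real.logb p SI ≤ Real.logb p ((p : ℝ) ^ J.card * SIJ) :=
    Real.logb_le_logb_of_le hp1 hSIpos key
  rw [Real.logb_mul (by positivity) (ne_of_gt hSIJpos), Real.logb_pow,
    Real.logb_self_eq_one hp1] at hlog
  linarith
end
end

section
/- (OR trick for majority from balancedness) Let t be even and let C: F_2^t → F_2 be a function that correctly computes IsBal_t on all inputs of Hamming weight at most t/2, i.e., C(x) = 1 if |x| = t/2 and C(x) = 0 if |x| < t/2. For x ∈ F_2^t and 0 ≤ i ≤ t, let x_i denote x with its first i bits set to 0. Then MAJ_t(x) = OR_{i=0}^{t} C(x_i), where MAJ_t(x) = 1 iff |x| ≥ t/2. -/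
open Finset
open scoped Classical

theorem stmt_17 (t : ℕ) (ht : Even t) (C : (Fin t → ZMod 2) → ZMod 2)
    (h1 : ∀ x : Fin t → ZMod 2,
        (Finset.univ.filter (fun i => x i = 1)).card = t / 2 → C x = 1)
    (h0 : ∀ x : Fin t → ZMod 2,
        (Finset.univ.filter (fun i => x i = 1)).card < t / 2 → C x = 0) :
    ∀ x : Fin t → ZMod 2,
      (t / 2 ≤ (Finset.univ.filter (fun i => x i = 1)).card ↔
        ∃ i ≤ t, C (fun j => if (j : ℕ) < i then 0 else x j) = 1) := by
  intro x
  set g : ℕ → ℕ := fun i =>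
    (Finset.univ.filter (fun j : Fin t => (if (j:ℕ) < i then (0:ZMod 2) else x j) = 1)).card
    with hg
  have hg0 : g 0 = (Finset.univ.filter (fun i => x i = 1)).card := by
    simp [hg]
  have hgt : g t = 0 := by
    simp only [hg, Finset.card_eq_zero]
    apply Finset.filter_false_of_mem
    intro j _
    simp [j.isLt]
  have hstep : ∀ i, g i ≤ g (i+1) + 1 := by
    intro i
    have hsub : (Finset.univ.filter (fun j : Fin t => (if (j:ℕ) < i then (0:ZMod 2) else x j) = 1))
        ⊆ (Finset.univ.filter (fun j : Fin t => (if (j:ℕ) < i+1 then (0:ZMod 2) else x j) = 1))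
          ∪ (Finset.univ.filter (fun j : Fin t => (j:ℕ) = i)) := by
      intro j hj
      simp only [Finset.mem_filter, Finset.mem_union, Finset.mem_univ, true_and] at hj ⊢
      by_cases h : (j:ℕ) = i
      · exact Or.inr h
      · left
        rcases lt_or_ge (j:ℕ) (i+1) with h2 | h2
        · exfalso
          have hji : (j:ℕ) < i := by omega
          simp [hji] at hj
        · have h3 : ¬ (j:ℕ) < i := by omega
          simp [h3] at hj
          simpa [show ¬ (j:ℕ) < i+1 by omega] using hj
    have hcard1 : (Finset.univ.filter (fun j : Fin t => (j:ℕ) = i)).card ≤ 1 := by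
      apply Finset.card_le_one.mpr
      intro a ha b hb
      simp only [Finset.mem_filter] at ha hb
      exact Fin.ext (ha.2.trans hb.2.symm)
    calc g i ≤ _ := Finset.card_le_card hsub
      _ ≤ g (i+1) + (Finset.univ.filter (fun j : Fin t => (j:ℕ) = i)).card :=
          Finset.card_union_le _ _
      _ ≤ g (i+1) + 1 := by omega
  have hmono : ∀ i, g (i+1) ≤ g i := by
    intro i
    apply Finset.card_le_card
    intro j hj
    simp only [Finset.mem_filter, Finset.mem_univ, true_and] at hj ⊢
    by_cases h : (j:ℕ) < i
    · exfalso
      have : (j:ℕ) < i + 1 := by omega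
      simp [this] at hj
    · simp only [h, if_false]
      by_cases h2 : (j:ℕ) < i + 1
      · exfalso
        simp [h2] at hj
      · simpa [h2] using hj
  constructor
  · intro hle
    have hex : ∃ i, g i ≤ t / 2 := ⟨t, by omega⟩
    set i := Nat.find hex with hi_def
    have hi : g i ≤ t / 2 := Nat.find_spec hex
    have hit : i ≤ t := Nat.find_min' hex (by omega)
    have higeq : g i = t / 2 := by
      rcases Nat.eq_zero_or_pos i with h | h
      · rw [h]
        rw [h] at hi
        omega
      · have hprev : ¬ g (i-1) ≤ t / 2 := Nat.find_min hex (by omega)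
        have hs := hstep (i-1)
        rw [Nat.sub_add_cancel h] at hs
        omega
    exact ⟨i, hit, h1 _ higeq⟩
  · rintro ⟨i, hit, hC⟩
    have hgi : ¬ g i < t / 2 := by
      intro h
      have := h0 (fun j => if (j:ℕ) < i then 0 else x j) h
      rw [this] at hC
      exact one_ne_zero hC.symm
    have hle0 : ∀ k, g k ≤ g 0 := by
      intro k
      induction k with
      | zero => exact le_refl _
      | succ n ih => exact le_trans (hmono n) ih
    have := hle0 i
    omega
end
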